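/- Let q ≥ 2, k ≥ 1, n > 2k, let x ∈ Irr(n) be irreducible, and suppose x'' is obtained from x by a sequence of exact k-TDs followed by one substitution adding a ∈ Σ_q∖{0} at a position p inside the copy of the last duplication, where p satisfies |x''| − k < p ≤ |x''| (the substitution lies in the last k positions of x''). Set μ = μ(φ̄(x)) and μ'' = μ(φ̄(x'')). Then exactly one of the following holds: (i) |μ''| = |μ| and μ'' is obtained from μ by replacing a single symbol 0 by a nonzero symbol; or (ii) |μ''| = |μ| + k and μ'' is obtained from μ by inserting a block of k consecutive symbols of the form 0^{j−1} a 0^{k−j} for some j ∈ {1,…,k} and a ∈ Σ_q∖{0} (a block of Hamming weight 1). -/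

import Mathlib

open List

namespace NoisyDup

variable {q : ℕ}

/-- Tandem duplication `T_{i,k}`: duplicates the length-`k` substring starting
after position `i` (0-based index `i`), if it exists. -/
def dup (i k : ℕ) (x : List (ZMod q)) : List (ZMod q) :=
  if i + k ≤ x.length then x.take i ++ (x.drop i).take k ++ x.drop i else x

/-- Add `a` (mod `q`) to the entry at 0-based index `i`. -/
def addAt (x : List (ZMod q)) (i : ℕ) (a : ZMod q) : List (ZMod q) :=
  x.set i (x.getD i 0 + a)

/-- One exact tandem duplication of length `k`. -/
def ExactStep (k : ℕ) (x y : List (ZMod q)) : Prop :=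
  ∃ i, i + k ≤ x.length ∧ y = dup i k x

/-- One noisy duplication of length `k`: an exact duplication followed by adding
some `a ≠ 0` to one symbol of the inserted copy (positions are 1-indexed). -/
def NoisyStep (k : ℕ) (x y : List (ZMod q)) : Prop :=
  ∃ (i : ℕ) (a : ZMod q) (j : ℕ), i + k ≤ x.length ∧ a ≠ 0 ∧
    i + k + 1 ≤ j ∧ j ≤ i + 2 * k ∧ y = addAt (dup i k x) (j - 1) a

/-- Descendants by exact duplications only: `D_k^{*(0)}`. -/
def ExactDesc (k : ℕ) (x y : List (ZMod q)) : Prop :=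
  Relation.ReflTransGen (ExactStep k) x y

/-- The descendant cone `D_k^{*(≤1)}`: any number of exact duplications and at
most one noisy duplication. -/
def descCone (k : ℕ) (x : List (ZMod q)) : Set (List (ZMod q)) :=
  {y | ExactDesc k x y ∨ ∃ u v, ExactDesc k x u ∧ NoisyStep k u v ∧ ExactDesc k v y}

/-- `φ̂(x)`: the first `k` symbols. -/
def hatPhi (k : ℕ) (x : List (ZMod q)) : List (ZMod q) := x.take k

/-- `φ̄(x)_i = x_{i+k} - x_i` (1-indexed), a string of length `|x| - k`. -/
def barPhi (k : ℕ) (x : List (ZMod q)) : List (ZMod q) :=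
  (List.range (x.length - k)).map fun i => x.getD (i + k) 0 - x.getD i 0

/-- Auxiliary for `mu`: `cnt` counts the current run of zeros. -/
def muAux (k : ℕ) : ℕ → List (ZMod q) → List (ZMod q)
  | cnt, [] => List.replicate (cnt % k) 0
  | cnt, a :: t =>
      if a = 0 then muAux k (cnt + 1) t
      else List.replicate (cnt % k) 0 ++ a :: muAux k 0 t

/-- `μ(z)`: reduce the length of every maximal run of zeros modulo `k`. -/
def mu (k : ℕ) (z : List (ZMod q)) : List (ZMod q) := muAux k 0 z

/-- `x` contains a tandem repeat of length `k`. -/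
def HasRepeat (k : ℕ) (x : List (ZMod q)) : Prop :=
  ∃ i, i + 2 * k ≤ x.length ∧ (x.drop i).take k = (x.drop (i + k)).take k

/-- `x` is irreducible: it contains no tandem repeat of length `k`. -/
def IsIrreducible (k : ℕ) (x : List (ZMod q)) : Prop := ¬ HasRepeat k x

/-- The duplication root: the (unique) irreducible ancestor of `x` under exact
duplications of length `k`. -/
noncomputable def rt (k : ℕ) (x : List (ZMod q)) : List (ZMod q) :=
  haveI := Classical.propDecidable (∃ z, IsIrreducible k z ∧ ExactDesc k z x)
  if h : ∃ z, IsIrreducible k z ∧ ExactDesc k z x then h.choose else x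

/-- The set of irreducible strings of length `n` over `Σ_q`. -/
def Irr (k n : ℕ) : Set (List (ZMod q)) := {x | x.length = n ∧ IsIrreducible k x}

/-- `ins_k(u, j)`: the subsequence of entries in (1-indexed) positions congruent
to `j` modulo `k`. -/
def splitk (k j : ℕ) (u : List (ZMod q)) : List (ZMod q) :=
  (((List.range u.length).zip u).filter fun p => p.1 % k == j - 1).map Prod.snd

/-- The interleaving `inl(u) = ins_k(u,1) ⋯ ins_k(u,k)`. -/
def inl (k : ℕ) (u : List (ZMod q)) : List (ZMod q) :=
  ((List.range k).map fun j => splitk k (j + 1) u).flatten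

/-- The indicator `Γ(z)` of the nonzero entries of `z`. -/
def gamma (z : List (ZMod q)) : List Bool := z.map fun a => decide (a ≠ 0)

/-- The cumulative-sum map (mod `q`). -/
def cusum (z : List (ZMod q)) : List (ZMod q) :=
  (List.range z.length).map fun i => (z.take (i + 1)).sum

/-- Hamming weight of a binary string. -/
def wt (u : List Bool) : ℕ := u.count true

/-- The VT syndrome `Σ i·u_i` (1-indexed). -/
def vtSum (u : List Bool) : ℕ := (((List.range u.length).zip u).map fun p => if p.2 then p.1 + 1 else 0).sum

/-- The (variable-length) Varshamov–Tenengolts code. -/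
def CVT (α m : ℕ) : Set (List Bool) := {z | z.length ≤ m - 1 ∧ vtSum z % m = α}

/-- `Σ_{i=1}^{|u|} i · (u_1 + ⋯ + u_i)`. -/
def wSum (u : List Bool) : ℕ :=
  ((List.range u.length).map fun i => (i + 1) * wt (u.take (i + 1))).sum

/-- Tenengolts' binary map `ζ`. -/
def zeta (z : List (ZMod q)) : List Bool :=
  ((List.range z.length).zip z).map fun p => if p.1 = 0 then true else decide ((z.getD (p.1 - 1) 0).val ≤ p.2.val)

/-- `Σ_{i=1}^{|z|} (i-1)·ζ(z)_i`. -/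
def tqSum (z : List (ZMod q)) : ℕ := (((List.range (zeta z).length).zip (zeta z)).map fun p => if p.2 then p.1 else 0).sum

/-- Tenengolts' (variable-length) `q`-ary single-indel-correcting code. -/
def CTq (α β m : ℕ) : Set (List (ZMod q)) :=
  {z | z.length ≤ m ∧ (z.map ZMod.val).sum % q = α ∧ tqSum z % m = β}

/-- The length of `s_j = Γ(ins_k(μ,j))` for a codeword of length `n`
(the number of positions in `{1,…,n-k}` congruent to `j` mod `k`). -/
def sLen (k n j : ℕ) : ℕ := (List.range (n - k)).countP fun i => i % k == j - 1

/-- Admissibility of the parameters of the code `C_nd`. -/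
def Admissible (q k n : ℕ) (a c : ℕ → ℕ) (b a1 a2 a3 a4 b1 b2 b3 b4 : ℕ) : Prop :=
  (∀ j ∈ Finset.Icc 1 k, a j ≤ 2 * (sLen k n j + 1)) ∧
  (∀ j ∈ Finset.Icc 1 k, c j ≤ 2 * sLen k n j) ∧
  b ≤ 4 ∧ a1 ≤ q - 1 ∧ a2 ≤ q - 1 ∧ a3 ≤ q - 1 ∧ a4 ≤ q - 1 ∧
  b1 ≤ (n - k) / 2 ∧ b2 ≤ (n - k) / 2 ∧ b3 ≤ n - k - 1 ∧ b4 ≤ n - k - 1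

/-- The code `C_nd` for the noisy duplication channel. -/
def Cnd (k n : ℕ) (a c : ℕ → ℕ) (b a1 a2 a3 a4 b1 b2 b3 b4 : ℕ) : Set (List (ZMod q)) :=
  {x | x.length = n ∧ IsIrreducible k x ∧
    (∀ j ∈ Finset.Icc 1 k,
        gamma (splitk k j (mu k (barPhi k x))) ∈
          CVT (a j) (2 * (gamma (splitk k j (mu k (barPhi k x)))).length + 3)) ∧
    (∀ j ∈ Finset.Icc 1 k,
        wSum (gamma (splitk k j (mu k (barPhi k x)))) %
          (2 * (gamma (splitk k j (mu k (barPhi k x)))).length + 1) = c j) ∧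
    ((Finset.Icc 1 k).sum fun j => wt (gamma (splitk k j (mu k (barPhi k x))))) % 5 = b ∧
    splitk 2 1 (inl k (mu k (barPhi k x))) ∈ CTq a1 b1 ((n - k + 1) / 2) ∧
    splitk 2 2 (inl k (mu k (barPhi k x))) ∈ CTq a2 b2 ((n - k + 1) / 2) ∧
    cusum (inl k (mu k (barPhi k x))) ∈ CTq a3 b3 (n - k) ∧
    inl k (mu k (barPhi k x)) ∈ CTq a4 b4 (n - k)}

/-- `w` is obtained from `u` by deleting one occurrence of the symbol `b`. -/
def delSymb (u w : List (ZMod q)) (b : ZMod q) : Prop :=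
  ∃ i, i < u.length ∧ u.getD i 0 = b ∧ w = u.eraseIdx i

/-- `w` is obtained from `u` by inserting the symbol `b` at some position. -/
def insOne (u w : List (ZMod q)) (b : ZMod q) : Prop :=
  ∃ i, i ≤ u.length ∧ w = u.take i ++ b :: u.drop i

/-- `w` is obtained from `u` by inserting the adjacent pair `b, c`. -/
def insPair (u w : List (ZMod q)) (b c : ZMod q) : Prop :=
  ∃ i, i ≤ u.length ∧ w = u.take i ++ b :: c :: u.drop i

/-- `w` is obtained from `u` by inserting two `0`s separated by exactly one
(unchanged) symbol of `u`. -/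
def insSpread0 (u w : List (ZMod q)) : Prop :=
  ∃ i, i < u.length ∧ w = u.take i ++ 0 :: u.getD i 0 :: 0 :: u.drop (i + 1)

/-- `w` is obtained from `u` by inserting a nonzero `a` and replacing the
symbol `c` immediately following the insertion point by `c - a`. -/
def insSub (u w : List (ZMod q)) : Prop :=
  ∃ a : ZMod q, a ≠ 0 ∧ ∃ i, i < u.length ∧
    w = u.take i ++ a :: (u.getD i 0 - a) :: u.drop (i + 1)

/-- `w` is obtained from `u` by replacing a single symbol `0` by a nonzero symbol. -/
def subOne (u w : List (ZMod q)) : Prop :=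
  ∃ i, i < u.length ∧ u.getD i 0 = 0 ∧ ∃ a : ZMod q, a ≠ 0 ∧ w = u.set i a

/-- `w` is obtained from `u` by replacing two adjacent symbols `0, c` by
`a, c - a` for some nonzero `a`. -/
def subTwo (u w : List (ZMod q)) : Prop :=
  ∃ i, i + 1 < u.length ∧ u.getD i 0 = 0 ∧ ∃ a : ZMod q, a ≠ 0 ∧
    w = u.take i ++ a :: (u.getD (i + 1) 0 - a) :: u.drop (i + 2)

/-- `w` is obtained from `u` by swapping an adjacent pair `b, 0` (with `b ≠ 0`)
into `0, b`. -/
def swapPair (u w : List (ZMod q)) : Prop :=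
  ∃ i, i + 1 < u.length ∧ u.getD i 0 ≠ 0 ∧ u.getD (i + 1) 0 = 0 ∧
    w = u.take i ++ 0 :: u.getD i 0 :: u.drop (i + 2)

/-- `w` is obtained from `u` by deleting a single symbol. -/
def delQ (u w : List (ZMod q)) : Prop := ∃ i, i < u.length ∧ w = u.eraseIdx i

/-- `w` is obtained from `u` by inserting a single symbol. -/
def insQ (u w : List (ZMod q)) : Prop :=
  ∃ (i : ℕ) (b : ZMod q), i ≤ u.length ∧ w = u.take i ++ b :: u.drop i


/-! The difference map `φ̄` turns an exact duplication of length `k` at position `i` into the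
insertion of `0^k` at position `i`, and `μ` erases such blocks, so `μ ∘ φ̄` is constant along
exact duplications. A substitution adding `a` at a position `m` among the last `k` symbols
changes only the entry `m - k` of `φ̄`, since entry `m` would pair `m` with the nonexistent
position `m + k`. Hence `φ̄(x'')` is `φ̄(x')` with a block `0^t a 0^(k-1-t)` inserted. In `μ`,
the zeros of this block merge with the adjacent runs of zeros; the new residues on both sides
of `a` add up, together with `a` itself, to the old residue modulo `k`, so they fill either
exactly the old reduced run (a `0` becomes `a`) or that run plus `k` further symbols (a
weight-one block is inserted). -/

theorem replicate_set {α : Type*} (x y : α) {m n : ℕ} (h : m < n) :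
    (replicate n x).set m y = replicate m x ++ y :: replicate (n - (m + 1)) x := by
  induction m generalizing n with
  | zero => cases n with
    | zero => omega
    | succ n => simp [replicate_succ]
  | succ m ih => cases n with
    | zero => omega
    | succ n => simp [replicate_succ, ih (show m < n by omega)]

theorem exists_eq_replicate_zero_append (v : List (ZMod q)) :
    ∃ s w, v = replicate s 0 ++ w ∧ ∀ b ∈ w.head?, b ≠ 0 := by
  induction v with
  | nil => exact ⟨0, [], rfl, by simp⟩
  | cons b t ih =>
    by_cases hb : b = 0
    · obtain ⟨s, w, rfl, hw⟩ := ih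
      exact ⟨s + 1, w, by simp [hb, replicate_succ], hw⟩
    · exact ⟨0, b :: t, rfl, by simpa using hb⟩

theorem muAux_cons_zero (k c : ℕ) (t : List (ZMod q)) :
    muAux k c (0 :: t) = muAux k (c + 1) t := by
  simp [muAux]

theorem muAux_cons_of_ne_zero (k c : ℕ) {b : ZMod q} (t : List (ZMod q)) (hb : b ≠ 0) :
    muAux k c (b :: t) = replicate (c % k) 0 ++ b :: muAux k 0 t := by
  simp [muAux, hb]

theorem muAux_replicate_zero_append (k s c : ℕ) (v : List (ZMod q)) :
    muAux k c (replicate s 0 ++ v) = muAux k (c + s) v := by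
  induction s generalizing c with
  | zero => rfl
  | succ s ih =>
    rw [replicate_succ, cons_append, muAux_cons_zero, ih, Nat.add_right_comm, Nat.add_assoc]

theorem muAux_of_head_ne_zero (k c : ℕ) {w : List (ZMod q)} (hw : ∀ b ∈ w.head?, b ≠ 0) :
    muAux k c w = replicate (c % k) 0 ++ muAux k 0 w := by
  cases w with
  | nil => simp [muAux]
  | cons b t => simp [muAux, hw b rfl]

theorem muAux_replicate_self_append (k c : ℕ) (v : List (ZMod q)) :
    muAux k c (replicate k 0 ++ v) = muAux k c v := by
  obtain ⟨s, w, rfl, hw⟩ := exists_eq_replicate_zero_append v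
  simp only [muAux_replicate_zero_append]
  rw [Nat.add_right_comm, muAux_of_head_ne_zero k (c + s + k) hw,
    muAux_of_head_ne_zero k (c + s) hw, Nat.add_mod_right]

theorem muAux_append_insert_rel (R : List (ZMod q) → List (ZMod q) → Prop)
    (hR : ∀ p w w', R w w' → R (p ++ w) (p ++ w')) {k : ℕ} {X v : List (ZMod q)}
    (hX : ∀ c, R (muAux k c v) (muAux k c (X ++ v))) (u : List (ZMod q)) (c : ℕ) :
    R (muAux k c (u ++ v)) (muAux k c (u ++ X ++ v)) := by
  induction u generalizing c with
  | nil => exact hX c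
  | cons b t ih =>
    by_cases hb : b = 0
    · simpa only [hb, cons_append, muAux_cons_zero] using ih (c + 1)
    · have h := hR (replicate (c % k) 0 ++ [b]) _ _ (ih 0)
      rwa [append_assoc, append_assoc, singleton_append, singleton_append,
        ← muAux_cons_of_ne_zero _ _ _ hb, ← muAux_cons_of_ne_zero _ _ _ hb] at h

theorem mu_append_replicate_append (k : ℕ) (u v : List (ZMod q)) :
    mu k (u ++ replicate k 0 ++ v) = mu k (u ++ v) :=
  (muAux_append_insert_rel (· = ·) (by rintro p w w' rfl; rfl)
    (fun c => (muAux_replicate_self_append k c v).symm) u 0).symm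

def SubOneOrInsBlock (k : ℕ) (w w' : List (ZMod q)) : Prop :=
  (w'.length = w.length ∧ subOne w w') ∨
  (w'.length = w.length + k ∧ ∃ pos ≤ w.length, ∃ j ∈ Finset.Icc 1 k,
    ∃ b : ZMod q, b ≠ 0 ∧
      w' = w.take pos ++ (replicate (j - 1) 0 ++ b :: replicate (k - j) 0) ++ w.drop pos)

theorem SubOneOrInsBlock.append_left {k : ℕ} {w w' : List (ZMod q)} (p : List (ZMod q))
    (h : SubOneOrInsBlock k w w') : SubOneOrInsBlock k (p ++ w) (p ++ w') := by
  rcases h with ⟨hlen, i, hi, hz, a, ha, rfl⟩ | ⟨hlen, pos, hpos, j, hj, b, hb, rfl⟩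
  · refine .inl ⟨by simp [hlen], p.length + i, by simp [hi], ?_, a, ha, ?_⟩
    · rwa [getD_append_right _ _ _ _ (by omega), Nat.add_sub_cancel_left]
    · rw [set_append_right _ _ (by omega), Nat.add_sub_cancel_left]
  · refine .inr ⟨by simp at hlen ⊢; omega, p.length + pos, by simp [hpos], j, hj, b, hb, ?_⟩
    simp [take_append, drop_append, take_of_length_le, drop_eq_nil_of_le]

theorem subOneOrInsBlock_replicate_append {k m C D : ℕ} (hm : m < k) (hC : C < k)
    (hD : D < k) (hmod : m + 1 + D ≡ C [MOD k]) {a : ZMod q} (ha : a ≠ 0) (R : List (ZMod q)) :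
    SubOneOrInsBlock k (replicate C 0 ++ R) (replicate m 0 ++ a :: (replicate D 0 ++ R)) := by
  have hdiv := Nat.mod_add_div (m + 1 + D) k
  have hlt : (m + 1 + D) / k < 2 := Nat.div_lt_of_lt_mul (by omega)
  rw [Nat.ModEq, Nat.mod_eq_of_lt hC] at hmod
  interval_cases hd : (m + 1 + D) / k
  · refine .inl ⟨by simp; omega, m, by simp; omega, ?_, a, ha, ?_⟩
    · rw [getD_append _ _ _ _ (by simp; omega), getD_eq_getElem?_getD, getElem?_replicate]
      split <;> rfl
    · rw [set_append_left _ _ (by simp; omega), replicate_set _ _ (by omega),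
        show C - (m + 1) = D by omega]
      simp
  · refine .inr ⟨by simp; omega, 0, by simp, m + 1, by simp; omega, a, ha, ?_⟩
    rw [take_zero, drop_zero, nil_append, Nat.add_sub_cancel, append_assoc, cons_append,
      ← append_assoc, replicate_append_replicate, show k - (m + 1) + C = D by omega]

theorem subOneOrInsBlock_muAux_block {k t : ℕ} (ht : t < k) {a : ZMod q} (ha : a ≠ 0)
    (v : List (ZMod q)) (c : ℕ) :
    SubOneOrInsBlock k (muAux k c v)
      (muAux k c ((replicate t 0 ++ a :: replicate (k - (t + 1)) 0) ++ v)) := by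
  obtain ⟨s, w, rfl, hw⟩ := exists_eq_replicate_zero_append v
  have hk : 0 < k := by omega
  rw [muAux_replicate_zero_append, muAux_of_head_ne_zero k (c + s) hw, append_assoc,
    muAux_replicate_zero_append, cons_append, muAux_cons_of_ne_zero _ _ _ ha,
    muAux_replicate_zero_append, muAux_replicate_zero_append,
    muAux_of_head_ne_zero k (0 + (k - (t + 1)) + s) hw]
  refine subOneOrInsBlock_replicate_append (Nat.mod_lt _ hk) (Nat.mod_lt _ hk) (Nat.mod_lt _ hk)
    ?_ ha _
  calc (c + t) % k + 1 + (0 + (k - (t + 1)) + s) % k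
      ≡ c + t + 1 + (0 + (k - (t + 1)) + s) [MOD k] :=
        ((Nat.mod_modEq _ _).add_right 1).add (Nat.mod_modEq _ _)
    _ = c + s + k := by omega
    _ ≡ c + s [MOD k] := Nat.add_modEq_right
    _ ≡ (c + s) % k [MOD k] := (Nat.mod_modEq _ _).symm

theorem subOneOrInsBlock_mu_insert {k t : ℕ} (ht : t < k) {a : ZMod q} (ha : a ≠ 0)
    (u v : List (ZMod q)) :
    SubOneOrInsBlock k (mu k (u ++ v))
      (mu k (u ++ (replicate t 0 ++ a :: replicate (k - (t + 1)) 0) ++ v)) :=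
  muAux_append_insert_rel _ (fun p _ _ h => h.append_left p)
    (subOneOrInsBlock_muAux_block ht ha v) u 0

@[simp] theorem length_barPhi (k : ℕ) (x : List (ZMod q)) :
    (barPhi k x).length = x.length - k := by
  simp [barPhi]

theorem getElem_barPhi (k : ℕ) (x : List (ZMod q)) {r : ℕ} (h : r < (barPhi k x).length) :
    (barPhi k x)[r] = x[r + k]'(by simp at h; omega) - x[r]'(by simp at h; omega) := by
  simp only [length_barPhi] at h
  simp [barPhi, getD_eq_getElem?_getD, getElem?_eq_getElem (show r + k < x.length by omega),
    getElem?_eq_getElem (show r < x.length by omega)]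

theorem barPhi_eq_zipWith (k : ℕ) (x : List (ZMod q)) :
    barPhi k x = zipWith (· - ·) (x.drop k) x :=
  ext_getElem (by simp) fun r _ _ => by simp [getElem_barPhi, Nat.add_comm k r]

theorem barPhi_append_self_append {k : ℕ} (A B C : List (ZMod q)) (hB : B.length = k) :
    barPhi k (A ++ B ++ B ++ C) =
      (barPhi k (A ++ B ++ C)).take A.length ++ replicate k 0 ++
        (barPhi k (A ++ B ++ C)).drop A.length := by
  set D := (A ++ B).drop k
  have hD : D.length = A.length := by simp [D, hB]
  have hdrop (T : List (ZMod q)) : (A ++ B ++ T).drop k = D ++ T :=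
    drop_append_of_le_length (by simp [hB])
  have hDA : (zipWith (· - ·) D A).length = A.length := by simp [hD]
  have hBB : zipWith (· - ·) B B = replicate k (0 : ZMod q) := by
    simp [zipWith_self, ← hB, map_const']
  have hφ : barPhi k (A ++ B ++ C) = zipWith (· - ·) D A ++ zipWith (· - ·) C (B ++ C) := by
    rw [barPhi_eq_zipWith, hdrop, append_assoc A, zipWith_append hD]
  rw [hφ, take_left' hDA, drop_left' hDA, barPhi_eq_zipWith, append_assoc (A ++ B), hdrop,
    append_assoc A, zipWith_append hD, zipWith_append (l₁ := B) rfl, hBB, append_assoc]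

theorem barPhi_dup {i k : ℕ} {y : List (ZMod q)} (hik : i + k ≤ y.length) :
    barPhi k (dup i k y) = (barPhi k y).take i ++ replicate k 0 ++ (barPhi k y).drop i := by
  have hy : y.take i ++ (y.drop i).take k ++ (y.drop i).drop k = y := by simp
  have hdup : dup i k y =
      y.take i ++ (y.drop i).take k ++ (y.drop i).take k ++ (y.drop i).drop k := by
    rw [dup, if_pos hik, append_assoc (y.take i ++ _), take_append_drop]
  have hA : (y.take i).length = i := by simp; omega
  rw [hdup, barPhi_append_self_append _ _ _ (by simp; omega), hy, hA]

theorem mu_barPhi_of_exactDesc {k : ℕ} {x y : List (ZMod q)} (h : ExactDesc k x y) :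
    mu k (barPhi k y) = mu k (barPhi k x) := by
  induction h with
  | refl => rfl
  | tail _ hstep ih =>
    obtain ⟨i, hik, rfl⟩ := hstep
    rw [barPhi_dup hik, mu_append_replicate_append, take_append_drop, ih]

theorem barPhi_addAt_of_length_le {k m : ℕ} {l : List (ZMod q)} (hkm : k ≤ m)
    (hm : l.length ≤ m + k) (a : ZMod q) :
    barPhi k (addAt l m a) = addAt (barPhi k l) (m - k) a := by
  apply ext_getElem
  · simp [addAt]
  · intro r h1 _
    have hr : r < l.length - k := by simpa [addAt] using h1
    simp only [addAt, getElem_set, getElem_barPhi, show m ≠ r by omega, if_false]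
    by_cases hmr : m = r + k
    · subst hmr
      simp only [↓reduceIte, Nat.add_sub_cancel,
        getD_eq_getElem _ _ (show r + k < l.length by omega),
        getD_eq_getElem _ _ (show r < (barPhi k l).length by simp; omega), getElem_barPhi]
      abel
    · simp [hmr, show m - k ≠ r by omega]

theorem addAt_append_replicate_zero_append {k t : ℕ} (ht : t < k) (u v : List (ZMod q))
    (a : ZMod q) :
    addAt (u ++ replicate k 0 ++ v) (u.length + t) a =
      u ++ (replicate t 0 ++ a :: replicate (k - (t + 1)) 0) ++ v := by
  have hget : (u ++ replicate k 0 ++ v).getD (u.length + t) 0 = 0 := by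
    simp [getD_eq_getElem?_getD, getElem?_append, ht]
  rw [addAt, hget, zero_add, append_assoc, set_append_right _ _ (by omega),
    Nat.add_sub_cancel_left, set_append_left _ _ (by simpa using ht), replicate_set _ _ ht]
  simp

theorem root_change_tail_substitution_general
    (q k : ℕ) (x : List (ZMod q))
    (x'' x' : List (ZMod q)) (i p : ℕ) (a : ZMod q)
    (hx' : ExactDesc k x x') (hik : i + k ≤ x'.length) (ha : a ≠ 0)
    (hp2 : p ≤ i + 2 * k)
    (hx'' : x'' = addAt (dup i k x') (p - 1) a)
    (htail : x''.length - k < p ∧ p ≤ x''.length) :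
    ((mu k (barPhi k x'')).length = (mu k (barPhi k x)).length ∧
      subOne (mu k (barPhi k x)) (mu k (barPhi k x''))) ∨
    ((mu k (barPhi k x'')).length = (mu k (barPhi k x)).length + k ∧
      ∃ pos ≤ (mu k (barPhi k x)).length, ∃ j ∈ Finset.Icc 1 k, ∃ b : ZMod q, b ≠ 0 ∧
        mu k (barPhi k x'') =
          (mu k (barPhi k x)).take pos ++
            (List.replicate (j - 1) 0 ++ b :: List.replicate (k - j) 0) ++
            (mu k (barPhi k x)).drop pos) := by
  have hdup : (dup i k x').length = x'.length + k := by
    rw [dup, if_pos hik]; simp; omega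
  have hlen : x''.length = x'.length + k := by rw [hx'', addAt, length_set, hdup]
  obtain ⟨t, rfl⟩ : ∃ t, p = i + k + t + 1 := ⟨p - (i + k + 1), by omega⟩
  have hi : ((barPhi k x').take i).length = i := by simp; omega
  have hφ : barPhi k x'' = (barPhi k x').take i ++
      (replicate t 0 ++ a :: replicate (k - (t + 1)) 0) ++ (barPhi k x').drop i := by
    rw [hx'', Nat.add_sub_cancel, barPhi_addAt_of_length_le (by omega) (by omega),
      barPhi_dup hik, show i + k + t - k = ((barPhi k x').take i).length + t by omega,
      addAt_append_replicate_zero_append (by omega)]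
  have h := subOneOrInsBlock_mu_insert (by omega : t < k) ha ((barPhi k x').take i)
    ((barPhi k x').drop i)
  rwa [take_append_drop, mu_barPhi_of_exactDesc hx', ← hφ] at h

/-- if the substitution of the unique noisy duplication falls in
the last `k` positions of `x''`, then the `μ`-root either keeps its length and
suffers a substitution of a single `0` by a nonzero symbol, or grows by `k` via
the insertion of a block `0^{j-1} a 0^{k-j}` of Hamming weight one. (The two
cases are mutually exclusive since `k ≥ 1`.) -/
theorem root_change_tail_substitution
    (q k n : ℕ) (hq : 2 ≤ q) (hk : 1 ≤ k) (hn : 2 * k < n)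
    (x : List (ZMod q)) (hx : x.length = n) (hirr : IsIrreducible k x)
    (x'' x' : List (ZMod q)) (i p : ℕ) (a : ZMod q)
    (hx' : ExactDesc k x x') (hik : i + k ≤ x'.length) (ha : a ≠ 0)
    (hp1 : i + k + 1 ≤ p) (hp2 : p ≤ i + 2 * k)
    (hx'' : x'' = addAt (dup i k x') (p - 1) a)
    (htail : x''.length - k < p ∧ p ≤ x''.length) :
    ((mu k (barPhi k x'')).length = (mu k (barPhi k x)).length ∧
      subOne (mu k (barPhi k x)) (mu k (barPhi k x''))) ∨
    ((mu k (barPhi k x'')).length = (mu k (barPhi k x)).length + k ∧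
      ∃ pos ≤ (mu k (barPhi k x)).length, ∃ j ∈ Finset.Icc 1 k, ∃ b : ZMod q, b ≠ 0 ∧
        mu k (barPhi k x'') =
          (mu k (barPhi k x)).take pos ++
            (List.replicate (j - 1) 0 ++ b :: List.replicate (k - j) 0) ++
            (mu k (barPhi k x)).drop pos) :=
  root_change_tail_substitution_general q k x x'' x' i p a hx' hik ha hp2 hx'' htail

end NoisyDup
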